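/- Let n ≥ 5. If [-,-] is a Lie bracket on μ₀ⁿ making (μ₀ⁿ, ·, [-,-]) a transposed 0-Poisson algebra, then there exist α₁,…,αₙ ∈ ℂ such that [e₁,e₂] = Σ_{t=1}^n αₜ eₜ and [eᵢ,eⱼ] = 0 for every pair (i,j) with 1 ≤ i < j ≤ n and (i,j) ≠ (1,2); that is, the structure is TP₀(α₁,…,αₙ). -/

import Mathlib

open Finset

/-- The null-filiform associative multiplication on `ℂⁿ = Fin n → ℂ`.
The basis vector `e_i` (1-based) corresponds to the coordinate `i - 1`, and
`e_i · e_j = e_{i+j}` if `i + j ≤ n`, and `0` otherwise. -/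
noncomputable def nfMul (n : ℕ) (x y : Fin n → ℂ) : Fin n → ℂ :=
  fun k => ∑ i : Fin n, ∑ j : Fin n,
    if (i : ℕ) + (j : ℕ) + 1 = (k : ℕ) then x i * y j else 0

/-- The 1-based basis vector `e i` of `ℂⁿ` (zero if `i` is out of range `1,…,n`). -/
noncomputable def nfE (n : ℕ) (i : ℕ) : Fin n → ℂ :=
  fun k => if (k : ℕ) + 1 = i then 1 else 0

/-- The coefficient of the basis vector `e i` (1-based) in `x`. -/
noncomputable def nfCoeff (n : ℕ) (x : Fin n → ℂ) (i : ℕ) : ℂ :=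
  ∑ k : Fin n, if (k : ℕ) + 1 = i then x k else 0

/-- A Lie bracket (bilinear, alternating, satisfying the Jacobi identity)
on a complex vector space. -/
structure LieBracketOn (L : Type*) [AddCommGroup L] [Module ℂ L] where
  br : L → L → L
  add_left : ∀ x y z, br (x + y) z = br x z + br y z
  smul_left : ∀ (c : ℂ) (x y : L), br (c • x) y = c • br x y
  add_right : ∀ x y z, br x (y + z) = br x y + br x z
  smul_right : ∀ (c : ℂ) (x y : L), br x (c • y) = c • br x y
  alt : ∀ x, br x x = 0
  jacobi : ∀ x y z, br (br x y) z + br (br y z) x + br (br z x) y = 0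

/-- `(μ₀ⁿ, ·, [-,-])` is a transposed `δ`-Poisson algebra:
`δ • (z · [x,y]) = [z·x, y] + [x, z·y]`. -/
noncomputable def IsTransposedPoisson (n : ℕ) (δ : ℂ) (B : LieBracketOn (Fin n → ℂ)) : Prop :=
  ∀ x y z, δ • nfMul n z (B.br x y) = B.br (nfMul n z x) y + B.br x (nfMul n z y)

/-- `(μ₀ⁿ, ·, [-,-])` is a `δ`-Poisson algebra:
`[x, y·z] = δ • ([x,y]·z + y·[x,z])`. -/
noncomputable def IsDeltaPoisson (n : ℕ) (δ : ℂ) (B : LieBracketOn (Fin n → ℂ)) : Prop :=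
  ∀ x y z, B.br x (nfMul n y z) = δ • (nfMul n (B.br x y) z + nfMul n y (B.br x z))

/-- The bracket of the transposed 0-Poisson algebra `TP₀(α₁,…,αₙ)` on `μ₀ⁿ`:
determined by `[e₁,e₂] = ∑_{t=1}^n αₜ eₜ` and `[eᵢ,eⱼ] = 0` for all other
pairs `i < j`. -/
noncomputable def brTP0 (n : ℕ) (α : ℕ → ℂ) (x y : Fin n → ℂ) : Fin n → ℂ :=
  (nfCoeff n x 1 * nfCoeff n y 2 - nfCoeff n x 2 * nfCoeff n y 1) •
    ∑ t ∈ Finset.Icc 1 n, α t • nfE n t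

/-- The bracket of the transposed 1-Poisson algebra `TP₁(α₂,…,αₙ)` on `μ₀ⁿ`:
determined by `[e₁,eᵢ] = ∑_{t=i}^n α_{t-i+2} eₜ` for `2 ≤ i ≤ n` and
`[eᵢ,eⱼ] = 0` for `2 ≤ i < j ≤ n`. -/
noncomputable def brTP1 (n : ℕ) (α : ℕ → ℂ) (x y : Fin n → ℂ) : Fin n → ℂ :=
  ∑ i ∈ Finset.Icc 2 n,
    (nfCoeff n x 1 * nfCoeff n y i - nfCoeff n x i * nfCoeff n y 1) •
      ∑ t ∈ Finset.Icc i n, α (t + 2 - i) • nfE n t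

/-- The bracket of the transposed `δ`-Poisson algebra `TP_δ(a, b, c)`
(`a = α_{n-2}`, `b = α_{n-1}`, `c = αₙ`) on `μ₀ⁿ`: determined by
`[e₁,e₂] = a e_{n-2} + b e_{n-1} + c eₙ`, `[e₁,e₃] = δ(a e_{n-1} + b eₙ)`,
`[e₂,e₃] = ((δ²-δ)/2) a eₙ`, `[e₁,e₄] = ((δ²+δ)/2) a eₙ`, and `[eᵢ,eⱼ] = 0`
for all other pairs `i < j`. -/
noncomputable def brTPd (n : ℕ) (δ a b c : ℂ) (x y : Fin n → ℂ) : Fin n → ℂ :=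
  (nfCoeff n x 1 * nfCoeff n y 2 - nfCoeff n x 2 * nfCoeff n y 1) •
      (a • nfE n (n-2) + b • nfE n (n-1) + c • nfE n n)
  + (nfCoeff n x 1 * nfCoeff n y 3 - nfCoeff n x 3 * nfCoeff n y 1) •
      (δ • (a • nfE n (n-1) + b • nfE n n))
  + (nfCoeff n x 2 * nfCoeff n y 3 - nfCoeff n x 3 * nfCoeff n y 2) •
      (((δ^2 - δ)/2 * a) • nfE n n)
  + (nfCoeff n x 1 * nfCoeff n y 4 - nfCoeff n x 4 * nfCoeff n y 1) •
      (((δ^2 + δ)/2 * a) • nfE n n)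

/-- Two bracket structures on `μ₀ⁿ` are isomorphic (as transposed δ-Poisson
algebras): there is a linear bijection preserving both `·` and `[-,-]`. -/
noncomputable def TPIso (n : ℕ) (B B' : (Fin n → ℂ) → (Fin n → ℂ) → (Fin n → ℂ)) : Prop :=
  ∃ φ : (Fin n → ℂ) ≃ₗ[ℂ] (Fin n → ℂ),
    (∀ x y, φ (nfMul n x y) = nfMul n (φ x) (φ y)) ∧
    ∀ x y, φ (B x y) = B' (φ x) (φ y)


lemma nfE_zero (n m : ℕ) (h : n < m) : nfE n m = 0 := by
  funext k
  have := k.isLt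
  simp only [nfE, Pi.zero_apply, ite_eq_right_iff]
  omega

lemma nfMul_e (n i j : ℕ) (hi : 1 ≤ i) (hi' : i ≤ n) (hj : 1 ≤ j) (hj' : j ≤ n) :
    nfMul n (nfE n i) (nfE n j) = nfE n (i + j) := by
  funext k
  simp only [nfMul, nfE]
  rw [Fintype.sum_eq_single (⟨i - 1, by omega⟩ : Fin n)]
  · rw [Fintype.sum_eq_single (⟨j - 1, by omega⟩ : Fin n)]
    · simp only [Fin.val_mk]
      have h1 : i - 1 + 1 = i := by omega
      have h2 : j - 1 + 1 = j := by omega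
      rw [if_pos h1, if_pos h2, mul_one]
      by_cases h : (k:ℕ) + 1 = i + j
      · rw [if_pos (by omega), if_pos h]
      · rw [if_neg (by omega), if_neg h]
    · intro b hb
      have : (b:ℕ) + 1 ≠ j := fun h => hb (by ext; simp; omega)
      simp [this]
  · intro a ha
    have : (a:ℕ) + 1 ≠ i := fun h => ha (by ext; simp; omega)
    simp [this]

lemma nfExpand (n : ℕ) (x : Fin n → ℂ) : x = ∑ t ∈ Finset.Icc 1 n, nfCoeff n x t • nfE n t := by
  funext k
  rw [Finset.sum_apply]
  rw [Finset.sum_eq_single ((k:ℕ)+1)]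
  · simp [nfE, nfCoeff]
    rw [Fintype.sum_eq_single k] <;> simp
    intro b hb h; exact absurd (Fin.ext h) hb
  · intro t _ ht
    simp only [Pi.smul_apply, nfE, if_neg (fun h : (k:ℕ)+1 = t => ht h.symm), smul_zero]
  · intro h; exfalso; apply h; simp

section MainAux
variable {L : Type*} [AddCommGroup L] [Module ℂ L] (B : LieBracketOn L)

lemma br_zero_right (x : L) : B.br x 0 = 0 := by
  have := B.smul_right 0 x 0
  simpa using this

lemma br_antisym (x y : L) : B.br x y = - B.br y x := by
  have h := B.alt (x + y)
  rw [B.add_left, B.add_right, B.add_right, B.alt, B.alt, zero_add, add_zero] at h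
  linear_combination (norm := abel) h

end MainAux

lemma keyTP0 (n : ℕ) (B : LieBracketOn (Fin n → ℂ)) (hB : IsTransposedPoisson n 0 B)
    (i j k : ℕ) (hi : 1 ≤ i) (hi' : i ≤ n) (hj : 1 ≤ j) (hj' : j ≤ n)
    (hk : 1 ≤ k) (hk' : k ≤ n) :
    B.br (nfE n (k + i)) (nfE n j) + B.br (nfE n i) (nfE n (k + j)) = 0 := by
  have := hB (nfE n i) (nfE n j) (nfE n k)
  rw [zero_smul, nfMul_e n k i hk hk' hi hi', nfMul_e n k j hk hk' hj hj'] at this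
  exact this.symm

/-- for `n ≥ 5`, any transposed `0`-Poisson structure on `μ₀ⁿ` is
of the form `TP₀(α₁,…,αₙ)`: there exist `α₁,…,αₙ` with
`[e₁,e₂] = ∑_{t=1}^n αₜ eₜ` and `[eᵢ,eⱼ] = 0` for every other pair `i < j`. -/
theorem stmt_6 (n : ℕ) (hn : 5 ≤ n)
    (B : LieBracketOn (Fin n → ℂ)) (hB : IsTransposedPoisson n 0 B) :
    ∃ α : ℕ → ℂ,
      B.br (nfE n 1) (nfE n 2) = ∑ t ∈ Finset.Icc 1 n, α t • nfE n t ∧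
      ∀ i j, 1 ≤ i → i < j → j ≤ n → ¬(i = 1 ∧ j = 2) →
        B.br (nfE n i) (nfE n j) = 0 := by
  have h13 : B.br (nfE n 1) (nfE n 3) = 0 := by
    have h := keyTP0 n B hB 1 2 1 (by omega) (by omega) (by omega) (by omega) (by omega) (by omega)
    rw [show (1+1 : ℕ) = 2 from rfl, show (1+2 : ℕ) = 3 from rfl, B.alt, zero_add] at h
    exact h
  have h1m : ∀ m, 4 ≤ m → B.br (nfE n 1) (nfE n m) = 0 := by
    intro m hm
    by_cases hmn : m ≤ n
    · have hA := keyTP0 n B hB 1 2 (m - 2) (by omega) (by omega) (by omega) (by omega)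
        (by omega) (by omega)
      have hC := keyTP0 n B hB 1 (m - 1) 1 (by omega) (by omega) (by omega) (by omega)
        (by omega) (by omega)
      rw [show m - 2 + 1 = m - 1 by omega, show m - 2 + 2 = m by omega] at hA
      rw [show 1 + 1 = 2 from rfl, show 1 + (m - 1) = m by omega] at hC
      have hanti := br_antisym B (nfE n (m-1)) (nfE n 2)
      have h2 : B.br (nfE n 1) (nfE n m) + B.br (nfE n 1) (nfE n m) = 0 := by
        have : B.br (nfE n (m-1)) (nfE n 2) = B.br (nfE n 1) (nfE n m) := by
          rw [hanti]; linear_combination (norm := abel) -hC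
        linear_combination (norm := abel) hA - this - hC + hC
      simpa [smul_add, ← two_smul ℂ, smul_smul] using h2
    · rw [nfE_zero n m (by omega), br_zero_right]
  refine ⟨fun t => nfCoeff n (B.br (nfE n 1) (nfE n 2)) t, ?_, ?_⟩
  · exact nfExpand n _
  · intro i j hi hij hj hne
    rcases Nat.lt_or_ge i 2 with h1 | h2
    · have hi1 : i = 1 := by omega
      subst hi1
      have hj3 : 3 ≤ j := by omega
      rcases Nat.eq_or_lt_of_le hj3 with h3 | h4
      · rw [← h3]; exact h13
      · exact h1m j (by omega)
    · have h := keyTP0 n B hB 1 j (i - 1) (by omega) (by omega) (by omega) (by omega)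
        (by omega) (by omega)
      rw [show i - 1 + 1 = i by omega] at h
      have : B.br (nfE n 1) (nfE n (i - 1 + j)) = 0 := h1m _ (by omega)
      rw [this, add_zero] at h
      exact h
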